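/- Let c₁, …, c_n, c' be i.i.d. real-valued random variables whose common distribution is atomless, and let k ∈ {1,…,n}. Let c₍ₖ₎ denote the k-th smallest value among c₁,…,c_n. Then P( c' ≤ c₍ₖ₎ ) = k/(n+1). In particular, for α ∈ (0,1), if k = ⌈(1−α)(n+1)⌉ and k ≤ n, then P( c' ≤ c₍ₖ₎ ) ≥ 1 − α. -/

import Mathlib

open MeasureTheory ProbabilityTheory

/-- The `k`-th smallest entry (zero-indexed `k : Fin n`) of a tuple `v : Fin n → ℝ`. -/
noncomputable def kthSmallest {n : ℕ} (v : Fin n → ℝ) (k : Fin n) : ℝ :=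
  v (Tuple.sort v k)

/-!
Append the fresh score `c'` to the `n` calibration scores. It lies below the `k`-th smallest
calibration score exactly when fewer than `k` of the `n + 1` scores are strictly smaller than
it. Since the law is atomless, the scores are almost surely distinct, and then exactly `k` of
the `n + 1` scores have this property; since the scores are exchangeable, each of them has it
with the same probability, which must therefore be `k / (n + 1)`.
-/

open Finset Function
open scoped ENNReal

theorem Monotone.le_apply_iff_card_filter_lt_le {α : Type*} [LinearOrder α] {m : ℕ}
    {w : Fin m → α} (hw : Monotone w) (k : Fin m) (t : α) :
    t ≤ w k ↔ #{i | w i < t} ≤ k := by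
  constructor
  · intro h
    calc #{i | w i < t} ≤ #(Iio k) := card_le_card fun i hi => by
          simp only [mem_filter, mem_univ, true_and] at hi
          exact mem_Iio.2 (lt_of_not_ge fun hki => (h.trans (hw hki)).not_gt hi)
      _ = k := Fin.card_Iio k
  · intro h
    by_contra! hlt
    have := card_le_card fun i (hi : i ∈ Iic k) =>
      mem_filter.2 ⟨mem_univ i, (hw (mem_Iic.1 hi)).trans_lt hlt⟩
    rw [Fin.card_Iic] at this
    omega

namespace Tuple

section Rank

variable {α ι : Type*} [LinearOrder α] [Fintype ι]

def rank (x : ι → α) (i : ι) : ℕ := #{j | x j < x i}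

theorem rank_comp_equiv {κ : Type*} [Fintype κ] (x : κ → α) (e : ι ≃ κ) (i : ι) :
    rank (x ∘ e) i = rank x (e i) :=
  card_equiv e (by simp)

theorem rank_lt_card (x : ι → α) (i : ι) : rank x i < Fintype.card ι :=
  (card_lt_card (filter_ssubset.2 ⟨i, mem_univ i, lt_irrefl (x i)⟩)).trans_eq card_univ

theorem rank_lt_rank {x : ι → α} {i i' : ι} (h : x i < x i') : rank x i < rank x i' :=
  card_lt_card ⟨fun j hj => by
      simp only [mem_filter, mem_univ, true_and] at hj ⊢
      exact hj.trans h,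
    fun hsub => lt_irrefl (x i) (mem_filter.1 (hsub (mem_filter.2 ⟨mem_univ i, h⟩))).2⟩

theorem rank_injective {x : ι → α} (hx : Injective x) : Injective (rank x) := by
  intro i i' h
  by_contra hne
  rcases (hx.ne hne).lt_or_gt with hlt | hlt
  · exact (rank_lt_rank hlt).ne h
  · exact (rank_lt_rank hlt).ne' h

theorem card_rank_lt {m : ℕ} {x : Fin m → α} (hx : Injective x) {k : ℕ} (hk : k ≤ m) :
    #{i | rank x i < k} = k := by
  let e : Fin m ≃ Fin m :=
    Equiv.ofBijective (fun i => ⟨rank x i, by simpa using rank_lt_card x i⟩)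
      (Finite.injective_iff_bijective.mp fun i i' h => rank_injective hx (congrArg Fin.val h))
  calc #{i | rank x i < k} = #{j : Fin m | (j : ℕ) < k} := card_equiv e (by simp [e])
    _ = k := by rw [Fin.card_filter_val_lt, min_eq_right hk]

theorem rank_last {n : ℕ} (x : Fin (n + 1) → α) :
    rank x (Fin.last n) = #{i : Fin n | x i.castSucc < x (Fin.last n)} := by
  rw [rank, Fin.univ_castSuccEmb, filter_cons, if_neg (lt_irrefl _), filter_map, card_map]
  rfl

end Rank

end Tuple

open Tuple

theorem le_kthSmallest_iff {m : ℕ} (v : Fin m → ℝ) (k : Fin m) (t : ℝ) :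
    t ≤ kthSmallest v k ↔ #{i | v i < t} ≤ k := by
  rw [kthSmallest, ← comp_apply (f := v), (monotone_sort v).le_apply_iff_card_filter_lt_le,
    card_equiv (t := {i | v i < t}) (sort v) (by simp)]

theorem le_kthSmallest_iff_rank_last_lt {n : ℕ} (x : Fin (n + 1) → ℝ) {k : ℕ} (hk : k < n) :
    x (Fin.last n) ≤ kthSmallest (fun i : Fin n => x i.castSucc) ⟨k, hk⟩ ↔
      rank x (Fin.last n) < k + 1 := by
  rw [le_kthSmallest_iff, rank_last, Nat.lt_succ_iff]

theorem measurableSet_rank_lt {ι : Type*} [Fintype ι] (i : ι) (k : ℕ) :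
    MeasurableSet {x : ι → ℝ | rank x i < k} := by
  have hrank : Measurable fun x : ι → ℝ => rank x i := by
    simp_rw [rank, card_filter]
    exact Finset.measurable_sum _ fun j _ =>
      Measurable.ite (measurableSet_lt (measurable_pi_apply j) (measurable_pi_apply i))
        measurable_const measurable_const
  exact hrank (measurableSet_Iio (a := k))

open scoped Classical in
theorem sum_measure_eq_of_ae_card_eq {X ι : Type*} [MeasurableSpace X] [Fintype ι]
    (ν : Measure X) {s : ι → Set X} (hs : ∀ i, MeasurableSet (s i)) {k : ℕ}
    (h : ∀ᵐ x ∂ν, #{i | x ∈ s i} = k) :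
    ∑ i, ν (s i) = k * ν Set.univ := by
  calc ∑ i, ν (s i) = ∑ i, ∫⁻ x, (s i).indicator 1 x ∂ν := by
        simp only [lintegral_indicator_one (hs _)]
    _ = ∫⁻ x, ∑ i, (s i).indicator 1 x ∂ν :=
        (lintegral_finsetSum _ fun i _ => measurable_one.indicator (hs i)).symm
    _ = ∫⁻ _, (k : ℝ≥0∞) ∂ν := lintegral_congr_ae <| h.mono fun x hx => by
        simp only [← hx, card_filter, Nat.cast_sum, Nat.cast_ite, Nat.cast_one, Nat.cast_zero,
          Set.indicator_apply, Pi.one_apply]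
    _ = k * ν Set.univ := lintegral_const _

theorem ProbabilityTheory.IndepFun.measure_eq_eq_zero {Ω α : Type*} [MeasurableSpace Ω]
    [MeasurableSpace α] [MeasurableEq α] {P : Measure Ω} [IsFiniteMeasure P] {X Y : Ω → α}
    (hXY : IndepFun X Y P) (hX : Measurable X) (hY : Measurable Y) [NullSingletonClass (P.map Y)] :
    P {ω | X ω = Y ω} = 0 := by
  have hdiag : MeasurableSet {p : α × α | p.1 = p.2} :=
    measurableSet_eq_fun measurable_fst measurable_snd
  calc P {ω | X ω = Y ω} = P.map (fun ω => (X ω, Y ω)) {p | p.1 = p.2} :=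
        (Measure.map_apply (hX.prodMk hY) hdiag).symm
    _ = ((P.map X).prod (P.map Y)) {p | p.1 = p.2} := by
        rw [(indepFun_iff_map_prod_eq_prod_map_map hX.aemeasurable hY.aemeasurable).1 hXY]
    _ = 0 := by
        rw [Measure.prod_apply hdiag]
        simp [Set.preimage]

theorem ae_injective_pi {ι α : Type*} [Fintype ι] [MeasurableSpace α] [MeasurableEq α]
    (μ : Measure α) [IsProbabilityMeasure μ] [NullSingletonClass μ] :
    ∀ᵐ x ∂Measure.pi (fun _ : ι => μ), Injective x := by
  have hne : ∀ i j, ∀ᵐ x ∂Measure.pi (fun _ : ι => μ), i ≠ j → x i ≠ x j := by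
    intro i j
    rcases eq_or_ne i j with rfl | hij
    · exact ae_of_all _ fun _ h => absurd rfl h
    have : NullSingletonClass ((Measure.pi fun _ : ι => μ).map (Function.eval j)) := by
      rw [(measurePreserving_eval _ j).map_eq]; infer_instance
    have hind : IndepFun (fun x : ι → α => x i) (fun x => x j) (Measure.pi fun _ => μ) :=
      (iIndepFun_pi (X := fun _ => id) fun _ => aemeasurable_id).indepFun hij
    refine ae_iff.2 ?_
    simpa [hij] using hind.measure_eq_eq_zero (measurable_pi_apply i) (measurable_pi_apply j)
  filter_upwards [ae_all_iff.2 fun i => ae_all_iff.2 (hne i)] with x hx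
  exact fun i j hxij => by_contra fun h => hx i j h hxij

theorem pi_setOf_rank_lt_eq {ι : Type*} [Fintype ι] [DecidableEq ι] (μ : Measure ℝ)
    [SigmaFinite μ] (i j : ι) (k : ℕ) :
    Measure.pi (fun _ : ι => μ) {x | rank x i < k} =
      Measure.pi (fun _ : ι => μ) {x | rank x j < k} := by
  have hswap := measurePreserving_piCongrLeft (fun _ : ι => μ) (Equiv.swap i j)
  rw [← hswap.measure_preimage (measurableSet_rank_lt j k).nullMeasurableSet]
  congr 1
  ext x
  have hx : Equiv.piCongrLeft (fun _ : ι => ℝ) (Equiv.swap i j) x =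
      x ∘ (Equiv.swap i j).symm := by
    funext b
    simp [Equiv.piCongrLeft_apply_eq_cast]
  simp [MeasurableEquiv.coe_piCongrLeft, hx, rank_comp_equiv]

theorem pi_setOf_rank_lt {m : ℕ} (μ : Measure ℝ) [IsProbabilityMeasure μ]
    [NullSingletonClass μ] (i : Fin m) {k : ℕ} (hk : k ≤ m) :
    Measure.pi (fun _ : Fin m => μ) {x | rank x i < k} = k / m := by
  set ν := Measure.pi fun _ : Fin m => μ
  have hsum : m * ν {x | rank x i < k} = k :=
    calc m * ν {x | rank x i < k} = ∑ j, ν {x | rank x j < k} := by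
          simp [pi_setOf_rank_lt_eq μ _ i, ν]
      _ = k * ν Set.univ := sum_measure_eq_of_ae_card_eq ν (measurableSet_rank_lt · k)
          ((ae_injective_pi μ).mono fun x hx => by simpa using card_rank_lt hx hk)
      _ = k := by simp
  exact (ENNReal.eq_div_iff (by simpa using i.pos.ne') (by simp)).2 hsum

/-- If `c₁, …, c_n, c'` are i.i.d. real random variables with
atomless common law and `k ∈ {1,…,n}`, then `P(c' ≤ c₍ₖ₎) = k/(n+1)`, where
`c₍ₖ₎` is the `k`-th smallest of `c₁,…,c_n`.  In particular, for `α ∈ (0,1)`,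
if `k = ⌈(1-α)(n+1)⌉` and `k ≤ n`, then `P(c' ≤ c₍ₖ₎) ≥ 1 - α`. -/
theorem fresh_score_le_order_statistic
    {Ω : Type*} [MeasurableSpace Ω] (P : Measure Ω) [IsProbabilityMeasure P]
    (n : ℕ) (μ : Measure ℝ) [IsProbabilityMeasure μ] [NullSingletonClass μ]
    (c : Fin (n + 1) → Ω → ℝ)
    (hmeas : ∀ i, Measurable (c i))
    (hindep : iIndepFun c P)
    (hlaw : ∀ i, P.map (c i) = μ)
    (k : ℕ) (hk1 : 1 ≤ k) (hkn : k ≤ n)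
    (chat : Ω → ℝ)
    (hchat : chat = fun ω =>
      kthSmallest (fun i : Fin n => c i.castSucc ω) ⟨k - 1, by omega⟩) :
    (P {ω | c (Fin.last n) ω ≤ chat ω}).toReal = k / (n + 1) ∧
      ∀ α : ℝ, α ∈ Set.Ioo (0 : ℝ) 1 → k = ⌈(1 - α) * ((n : ℝ) + 1)⌉₊ →
        1 - α ≤ (P {ω | c (Fin.last n) ω ≤ chat ω}).toReal := by
  have hF : Measurable fun ω i => c i ω := measurable_pi_lambda _ hmeas
  have hjoint : P.map (fun ω i => c i ω) = Measure.pi fun _ => μ := by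
    rw [(iIndepFun_iff_map_fun_eq_pi_map fun i => (hmeas i).aemeasurable).1 hindep]
    simp only [hlaw]
  have hevent : {ω | c (Fin.last n) ω ≤ chat ω} =
      (fun ω i => c i ω) ⁻¹' {x | rank x (Fin.last n) < k} := by
    ext ω
    simp only [hchat, Set.mem_preimage, Set.mem_ofPred_eq]
    exact (le_kthSmallest_iff_rank_last_lt (fun i => c i ω) _).trans
      (by rw [Nat.sub_add_cancel hk1])
  have hprob : (P {ω | c (Fin.last n) ω ≤ chat ω}).toReal = k / (n + 1) := by
    rw [hevent, ← Measure.map_apply hF (measurableSet_rank_lt _ _), hjoint,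
      pi_setOf_rank_lt μ _ (by omega), ENNReal.toReal_div]
    simp [ENNReal.toReal_add]
  refine ⟨hprob, fun α _ hkα => ?_⟩
  rw [hprob, le_div_iff₀ (by positivity), hkα]
  exact Nat.le_ceil _
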